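/- Let M be a discrete-time Markov process with state space S and suppose there exists a probability measure π on S such that for every x ∈ S, lim_{n→∞} sup_{m ∈ ℕ} ∫_S d_W(p^n(y,·), π) p^m(x,dy) = 0. Then for every bounded Lipschitz function f : S → ℝ and every x ∈ S, lim_{n→∞} E^x[ ((1/n) Σ_{k=0}^{n-1} f(M_k))^2 ] = (∫_S f dπ)^2. -/

import Mathlib

/-!
Write `a = ∫ f dπ`, `|f| ≤ C` and `φ n = sup_m ∫ d_W(p^n(y,·), π) p^m(x,dy)`. For `j ≤ k` the
Markov property gives `E^x[f(M_j) f(M_k)] = E^x[f(M_j) (P_{k-j} f)(M_j)]`, and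
`|P_t f - a| ≤ Lip(f) d_W(p^t, π)` straight from the definition of `d_W`; hence the correlation
`E^x[f(M_j) f(M_k)]` is `a²` up to `C Lip(f) (φ(k - j) + φ j)`. The second moment of the ergodic
average is the double Cesàro mean of these correlations, so it tends to `a²` because `φ n → 0`.

The one delicate point is the measurability of `y ↦ d_W(p^n(y,·), π)`. On a separable space the
1-Lipschitz functions bounded by 1 are separable for pointwise convergence, and dominated
convergence carries pointwise limits to integrals, so the supremum defining `d_W` may be taken over
a countable family.
-/

open MeasureTheory Filter Topology

/-- The `L¹`-Wasserstein (Kantorovich–Rubinstein) distance between two measures: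
`d_W(μ,ν) = sup { |∫ f dμ - ∫ f dν| : f 1-Lipschitz }`. -/
noncomputable def wassDist {S : Type*} [MeasurableSpace S] [PseudoMetricSpace S]
    (μ ν : Measure S) : ℝ :=
  ⨆ f : {g : S → ℝ // LipschitzWith 1 g}, |(∫ y, f.1 y ∂μ) - ∫ y, f.1 y ∂ν|

/-- A (normal, temporally homogeneous) discrete-time Markov process: a family of probability
measures `P x` on a sample space `Ω` depending measurably on the starting point `x`, a process
`M` such that `M 0 = x` holds `P x`-a.s., satisfying the Markov property with respect to the
natural filtration, with temporally homogeneous transition function `(P x).map (M t)`. -/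
structure DiscreteMarkovProcess (S : Type*) [MeasurableSpace S]
    (Ω : Type*) [MeasurableSpace Ω] where
  P : S → Measure Ω
  M : ℕ → Ω → S
  prob : ∀ x, IsProbabilityMeasure (P x)
  measM : ∀ n, Measurable (M n)
  measP : Measurable P
  start : ∀ x, (P x).map (M 0) = Measure.dirac x
  markov : ∀ (x : S) (s t : ℕ) (g : S → ℝ), Measurable g → (∃ C, ∀ z, |g z| ≤ C) →
    (P x)[(fun ω => g (M (s + t) ω)) |
        ⨆ u : {u : ℕ // u ≤ s}, MeasurableSpace.comap (M u.1) inferInstance]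
      =ᵐ[P x] fun ω => ∫ y, g y ∂((P (M s ω)).map (M t))

/-- The transition function `p t x (dy) = P^x (M_t ∈ dy)` of a discrete-time Markov process. -/
noncomputable def DiscreteMarkovProcess.p {S : Type*} [MeasurableSpace S]
    {Ω : Type*} [MeasurableSpace Ω] (X : DiscreteMarkovProcess S Ω) (n : ℕ) (x : S) :
    Measure S := (X.P x).map (X.M n)

lemma integral_sub_const_sub_integral_sub_const {α : Type*} [MeasurableSpace α] {f : α → ℝ}
    {μ ν : Measure α} [IsProbabilityMeasure μ] [IsProbabilityMeasure ν] (hμ : Integrable f μ)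
    (hν : Integrable f ν) (c : ℝ) :
    (∫ y, (f y - c) ∂μ) - ∫ y, (f y - c) ∂ν = (∫ y, f y ∂μ) - ∫ y, f y ∂ν := by
  simp [integral_sub hμ (integrable_const c), integral_sub hν (integrable_const c)]

lemma abs_integral_le_of_forall_abs_le {α : Type*} [MeasurableSpace α] {f : α → ℝ}
    {μ : Measure α} [IsProbabilityMeasure μ] {C : ℝ} (hC : ∀ z, |f z| ≤ C) :
    |∫ y, f y ∂μ| ≤ C := by
  simpa using norm_integral_le_of_norm_le_const (μ := μ) (f := f) (ae_of_all _ hC)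

section Wasserstein

variable {S : Type*} [PseudoMetricSpace S]

lemma LipschitzWith.abs_sub_le {K : NNReal} {f : S → ℝ} (hd : ∀ x y : S, dist x y ≤ 1)
    (hf : LipschitzWith K f) (x y : S) : |f x - f y| ≤ K := by
  simpa [Real.dist_eq] using
    (hf.dist_le_mul x y).trans (mul_le_of_le_one_right K.coe_nonneg (hd x y))

variable [MeasurableSpace S]

lemma wassDist_nonneg (μ ν : Measure S) : 0 ≤ wassDist μ ν :=
  Real.iSup_nonneg fun _ => abs_nonneg _

variable [OpensMeasurableSpace S]

lemma LipschitzWith.integrable_of_dist_le_one {K : NNReal} {f : S → ℝ}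
    (hd : ∀ x y : S, dist x y ≤ 1) (hf : LipschitzWith K f) (μ : Measure S) [IsFiniteMeasure μ] :
    Integrable f μ :=
  (BoundedContinuousFunction.mkOfBound ⟨f, hf.continuous⟩ K fun x y => by
    simpa [Real.dist_eq] using hf.abs_sub_le hd x y).integrable μ

lemma abs_integral_sub_integral_le_two {f : S → ℝ} (hd : ∀ x y : S, dist x y ≤ 1)
    (hf : LipschitzWith 1 f) (μ ν : Measure S) [IsProbabilityMeasure μ] [IsProbabilityMeasure ν] :
    |(∫ y, f y ∂μ) - ∫ y, f y ∂ν| ≤ 2 := by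
  obtain ⟨z⟩ := nonempty_of_isProbabilityMeasure μ
  have hnear : ∀ (ρ : Measure S) [IsProbabilityMeasure ρ], |(∫ y, f y ∂ρ) - f z| ≤ 1 := by
    intro ρ _
    have := abs_integral_le_of_forall_abs_le (μ := ρ) (f := fun y => f y - f z)
      fun y => by simpa using hf.abs_sub_le hd y z
    rwa [integral_sub (hf.integrable_of_dist_le_one hd ρ) (integrable_const _),
      integral_const, probReal_univ, one_smul] at this
  calc |(∫ y, f y ∂μ) - ∫ y, f y ∂ν| ≤ |(∫ y, f y ∂μ) - f z| + |f z - ∫ y, f y ∂ν| :=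
        abs_sub_le _ _ _
    _ ≤ 1 + 1 := add_le_add (hnear μ) ((abs_sub_comm _ _).trans_le (hnear ν))
    _ = 2 := one_add_one_eq_two

lemma bddAbove_range_abs_integral_sub_integral {ι : Sort*} {g : ι → S → ℝ}
    (hd : ∀ x y : S, dist x y ≤ 1) (hg : ∀ i, LipschitzWith 1 (g i)) (μ ν : Measure S)
    [IsProbabilityMeasure μ] [IsProbabilityMeasure ν] :
    BddAbove (Set.range fun i => |(∫ y, g i y ∂μ) - ∫ y, g i y ∂ν|) :=
  ⟨2, by rintro _ ⟨i, rfl⟩; exact abs_integral_sub_integral_le_two hd (hg i) μ ν⟩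

lemma norm_wassDist_le_two (hd : ∀ x y : S, dist x y ≤ 1) (μ ν : Measure S)
    [IsProbabilityMeasure μ] [IsProbabilityMeasure ν] : ‖wassDist μ ν‖ ≤ 2 := by
  rw [Real.norm_eq_abs, abs_of_nonneg (wassDist_nonneg μ ν)]
  exact Real.iSup_le (fun f => abs_integral_sub_integral_le_two hd f.2 μ ν) zero_le_two

lemma abs_integral_sub_integral_le_wassDist {f : S → ℝ} (hd : ∀ x y : S, dist x y ≤ 1)
    (hf : LipschitzWith 1 f) (μ ν : Measure S) [IsProbabilityMeasure μ] [IsProbabilityMeasure ν] :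
    |(∫ y, f y ∂μ) - ∫ y, f y ∂ν| ≤ wassDist μ ν :=
  le_ciSup (f := fun g : {g : S → ℝ // LipschitzWith 1 g} => |(∫ y, g.1 y ∂μ) - ∫ y, g.1 y ∂ν|)
    (bddAbove_range_abs_integral_sub_integral hd (fun g => g.2) μ ν) ⟨f, hf⟩

lemma LipschitzWith.abs_integral_sub_integral_le_mul_wassDist {K : NNReal} {f : S → ℝ}
    (hd : ∀ x y : S, dist x y ≤ 1) (hf : LipschitzWith K f) (μ ν : Measure S)
    [IsProbabilityMeasure μ] [IsProbabilityMeasure ν] :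
    |(∫ y, f y ∂μ) - ∫ y, f y ∂ν| ≤ K * wassDist μ ν := by
  rcases eq_or_ne K 0 with rfl | hK
  · obtain ⟨z⟩ := nonempty_of_isProbabilityMeasure μ
    have hconst : f = fun _ => f z := funext fun y => by
      simpa [sub_eq_zero] using hf.abs_sub_le hd y z
    rw [hconst]
    simp
  · have hK' : (0 : ℝ) < K := by positivity
    have hg : LipschitzWith 1 fun y => (K : ℝ)⁻¹ * f y := by
      refine LipschitzWith.of_dist_le_mul fun y z => ?_
      rw [Real.dist_eq, ← mul_sub, abs_mul, abs_inv, abs_of_pos hK', NNReal.coe_one, one_mul,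
        inv_mul_le_iff₀ hK', ← Real.dist_eq]
      exact hf.dist_le_mul y z
    have := abs_integral_sub_integral_le_wassDist hd hg μ ν
    rw [integral_const_mul, integral_const_mul, ← mul_sub, abs_mul, abs_inv,
      abs_of_pos hK', inv_mul_le_iff₀ hK'] at this
    exact this

end Wasserstein

section CountableReduction

open TopologicalSpace

variable {S : Type*} [PseudoMetricSpace S]

lemma Dense.tendsto_of_lipschitzWith {α ι : Type*} [PseudoMetricSpace α] {l : Filter ι}
    {K : NNReal} {g : ι → S → α} (hg : ∀ i, LipschitzWith K (g i)) {f : S → α}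
    (hf : Continuous f) {s : Set S} (hs : Dense s) (h : ∀ z ∈ s, Tendsto (g · z) l (𝓝 (f z)))
    (x : S) : Tendsto (g · x) l (𝓝 (f x)) :=
  ((LipschitzWith.uniformEquicontinuous g K hg).equicontinuous.isClosed_setOfPred_tendsto
    hf).closure_subset_iff.2 h (hs x)

variable (S) in
def lipschitzUnitBall : Set (S → ℝ) := {g | LipschitzWith 1 g ∧ ∀ z, |g z| ≤ 1}

lemma exists_countable_seq_tendsto_of_mem_lipschitzUnitBall [SeparableSpace S] :
    ∃ D ⊆ lipschitzUnitBall S, D.Countable ∧ ∀ f ∈ lipschitzUnitBall S,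
      ∃ g : ℕ → S → ℝ, (∀ n, g n ∈ D) ∧ ∀ x, Tendsto (g · x) atTop (𝓝 (f x)) := by
  obtain ⟨s, hsc, hsd⟩ := exists_countable_dense S
  have := hsc.to_subtype
  set L := lipschitzUnitBall S
  let restrict : (S → ℝ) → (s → ℝ) := fun g z => g z
  obtain ⟨t, htL, htc, hLt⟩ :=
    (IsSeparable.of_separableSpace (restrict '' L)).exists_countable_dense_subset
  refine ⟨Function.invFunOn restrict L '' t,
    Set.image_subset_iff.2 fun v hv => Function.invFunOn_mem (htL hv), htc.image _,
    fun f hf => ?_⟩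
  obtain ⟨v, hvt, hv⟩ := mem_closure_iff_seq_limit.1 (hLt ⟨f, hf, rfl⟩)
  refine ⟨fun n => Function.invFunOn restrict L (v n), fun n => Set.mem_image_of_mem _ (hvt n),
    hsd.tendsto_of_lipschitzWith (fun n => (Function.invFunOn_mem (htL (hvt n))).1)
      hf.1.continuous fun z hz => ?_⟩
  have hrestrict : ∀ n, Function.invFunOn restrict L (v n) z = v n ⟨z, hz⟩ := fun n =>
    congrFun (Function.invFunOn_eq (htL (hvt n))) ⟨z, hz⟩
  simpa only [hrestrict] using tendsto_pi_nhds.1 hv ⟨z, hz⟩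

variable [MeasurableSpace S] [OpensMeasurableSpace S]

lemma exists_countable_wassDist_eq_iSup [SeparableSpace S] (hd : ∀ x y : S, dist x y ≤ 1) :
    ∃ D : Set (S → ℝ), D.Countable ∧ (∀ g ∈ D, LipschitzWith 1 g) ∧
      ∀ (μ ν : Measure S) [IsProbabilityMeasure μ] [IsProbabilityMeasure ν],
        wassDist μ ν = ⨆ g : D, |(∫ y, g.1 y ∂μ) - ∫ y, g.1 y ∂ν| := by
  obtain ⟨D, hDL, hDc, happrox⟩ := exists_countable_seq_tendsto_of_mem_lipschitzUnitBall (S := S)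
  refine ⟨D, hDc, fun g hg => (hDL hg).1, fun μ ν _ _ => le_antisymm ?_ ?_⟩
  · refine Real.iSup_le (fun f => ?_) (Real.iSup_nonneg fun _ => abs_nonneg _)
    obtain ⟨z⟩ := nonempty_of_isProbabilityMeasure μ
    have hf₀ : (fun y => f.1 y - f.1 z) ∈ lipschitzUnitBall S :=
      ⟨by simpa using f.2.sub (LipschitzWith.const (f.1 z)),
        fun y => by simpa using f.2.abs_sub_le hd y z⟩
    rw [← integral_sub_const_sub_integral_sub_const (f.2.integrable_of_dist_le_one hd μ)
      (f.2.integrable_of_dist_le_one hd ν) (f.1 z)]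
    obtain ⟨g, hgD, hg⟩ := happrox _ hf₀
    have hlim : ∀ (ρ : Measure S) [IsProbabilityMeasure ρ],
        Tendsto (fun n => ∫ y, g n y ∂ρ) atTop (𝓝 (∫ y, f.1 y - f.1 z ∂ρ)) := fun ρ _ =>
      tendsto_integral_of_dominated_convergence (fun _ => 1)
        (fun n => (hDL (hgD n)).1.continuous.aestronglyMeasurable) (integrable_const 1)
        (fun n => ae_of_all _ (hDL (hgD n)).2) (ae_of_all _ hg)
    exact le_of_tendsto' ((hlim μ).sub (hlim ν)).abs fun n =>
      le_ciSup (f := fun g : D => |(∫ y, g.1 y ∂μ) - ∫ y, g.1 y ∂ν|)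
        (bddAbove_range_abs_integral_sub_integral hd (fun g => (hDL g.2).1) μ ν) ⟨g n, hgD n⟩
  · exact Real.iSup_le (fun g => abs_integral_sub_integral_le_wassDist hd (hDL g.2).1 μ ν)
      (wassDist_nonneg μ ν)

lemma measurable_wassDist_kernel [SeparableSpace S] (hd : ∀ x y : S, dist x y ≤ 1)
    {α : Type*} [MeasurableSpace α] (κ : ProbabilityTheory.Kernel α S)
    [ProbabilityTheory.IsMarkovKernel κ] (ν : Measure S) [IsProbabilityMeasure ν] :
    Measurable fun a => wassDist (κ a) ν := by
  obtain ⟨D, hDc, hDL, hD⟩ := exists_countable_wassDist_eq_iSup hd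
  have := hDc.to_subtype
  simp only [hD]
  exact Measurable.iSup fun g =>
    ((hDL g.1 g.2).continuous.stronglyMeasurable.integral_kernel.measurable.sub_const _).abs

end CountableReduction

namespace DiscreteMarkovProcess

open ProbabilityTheory

variable {S Ω : Type*} [MeasurableSpace S] [MeasurableSpace Ω] (X : DiscreteMarkovProcess S Ω)

instance (x : S) : IsProbabilityMeasure (X.P x) := X.prob x

instance (n : ℕ) (x : S) : IsProbabilityMeasure (X.p n x) :=
  Measure.isProbabilityMeasure_map (X.measM n).aemeasurable

noncomputable def kernel (n : ℕ) : Kernel S S :=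
  ⟨X.p n, (Measure.measurable_map _ (X.measM n)).comp X.measP⟩

instance (n : ℕ) : IsMarkovKernel (X.kernel n) :=
  ⟨fun x => inferInstanceAs (IsProbabilityMeasure (X.p n x))⟩

lemma p_zero (x : S) : X.p 0 x = Measure.dirac x := X.start x

lemma integral_comp {g : S → ℝ} (n : ℕ) (x : S) (hg : AEStronglyMeasurable g (X.p n x)) :
    ∫ ω, g (X.M n ω) ∂(X.P x) = ∫ y, g y ∂(X.p n x) :=
  (integral_map (X.measM n).aemeasurable hg).symm

lemma measurable_integral_p {g : S → ℝ} (n : ℕ) (hg : StronglyMeasurable g) :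
    Measurable fun y => ∫ z, g z ∂(X.p n y) :=
  (hg.integral_kernel (κ := X.kernel n)).measurable

lemma integrable_comp_mul_comp {f g : S → ℝ} (hf : Measurable f) (hg : Measurable g) {Cf Cg : ℝ}
    (hCf : ∀ z, |f z| ≤ Cf) (hCg : ∀ z, |g z| ≤ Cg) (x : S) (j k : ℕ) :
    Integrable (fun ω => f (X.M j ω) * g (X.M k ω)) (X.P x) :=
  .of_bound ((hf.comp (X.measM j)).mul (hg.comp (X.measM k))).aestronglyMeasurable (Cf * Cg)
    (ae_of_all _ fun ω => by
      rw [Real.norm_eq_abs, abs_mul]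
      exact mul_le_mul (hCf _) (hCg _) (abs_nonneg _) ((abs_nonneg _).trans (hCf (X.M j ω))))

abbrev past (s : ℕ) : MeasurableSpace Ω :=
  ⨆ u : {u : ℕ // u ≤ s}, MeasurableSpace.comap (X.M u.1) inferInstance

/-- Conditioning on the natural filtration at time `s` replaces `g (M (s + t))` by
`∫ g dp^t(M s, ·)`, and `f (M s)` pulls out of the conditional expectation. -/
lemma integral_comp_mul_comp_add {f g : S → ℝ} (hf : Measurable f) (hg : Measurable g)
    {Cf Cg : ℝ} (hCf : ∀ z, |f z| ≤ Cf) (hCg : ∀ z, |g z| ≤ Cg) (x : S) (s t : ℕ) :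
    ∫ ω, f (X.M s ω) * g (X.M (s + t) ω) ∂(X.P x)
      = ∫ ω, f (X.M s ω) * ∫ y, g y ∂(X.p t (X.M s ω)) ∂(X.P x) := by
  have hFle : X.past s ≤ ‹MeasurableSpace Ω› := iSup_le fun u => (X.measM u.1).comap_le
  have hfF : StronglyMeasurable[X.past s] fun ω => f (X.M s ω) :=
    ((hf.comp (comap_measurable (X.M s))).mono
      (le_iSup (fun u : {u : ℕ // u ≤ s} => MeasurableSpace.comap (X.M u.1) inferInstance)
        ⟨s, le_rfl⟩) le_rfl).stronglyMeasurable
  have hg_int : Integrable (fun ω => g (X.M (s + t) ω)) (X.P x) :=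
    .of_bound (hg.comp (X.measM _)).aestronglyMeasurable Cg (ae_of_all _ fun ω => hCg _)
  have hpull := condExp_mul_of_stronglyMeasurable_left hfF
    (X.integrable_comp_mul_comp hf hg hCf hCg x s (s + t)) hg_int
  have hmarkov : (X.P x)[fun ω => g (X.M (s + t) ω)|X.past s]
      =ᵐ[X.P x] fun ω => ∫ y, g y ∂(X.p t (X.M s ω)) := X.markov x s t g hg ⟨Cg, hCg⟩
  calc ∫ ω, f (X.M s ω) * g (X.M (s + t) ω) ∂(X.P x)
      = ∫ ω, ((X.P x)[fun ω => f (X.M s ω) * g (X.M (s + t) ω)|X.past s]) ω ∂(X.P x) :=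
        (integral_condExp hFle).symm
    _ = ∫ ω, f (X.M s ω) * ∫ y, g y ∂(X.p t (X.M s ω)) ∂(X.P x) := by
        refine integral_congr_ae ?_
        filter_upwards [hpull, hmarkov] with ω hω hω'
        exact hω.trans (congrArg (f (X.M s ω) * ·) hω')

variable [PseudoMetricSpace S]

noncomputable def mixingRate (π : Measure S) (x : S) (n : ℕ) : ℝ :=
  ⨆ m : ℕ, ∫ y, wassDist (X.p n y) π ∂(X.p m x)

lemma mixingRate_nonneg (π : Measure S) (x : S) (n : ℕ) : 0 ≤ X.mixingRate π x n :=
  Real.iSup_nonneg fun _ => integral_nonneg fun y => wassDist_nonneg (X.p n y) π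

variable [OpensMeasurableSpace S]

lemma integral_wassDist_le_mixingRate (hd : ∀ x y : S, dist x y ≤ 1) (π : Measure S)
    [IsProbabilityMeasure π] (x : S) (n m : ℕ) :
    ∫ y, wassDist (X.p n y) π ∂(X.p m x) ≤ X.mixingRate π x n := by
  refine le_ciSup (f := fun m => ∫ y, wassDist (X.p n y) π ∂(X.p m x)) ⟨2, ?_⟩ m
  rintro _ ⟨m, rfl⟩
  have := norm_integral_le_of_norm_le_const (μ := X.p m x) (f := fun y => wassDist (X.p n y) π)
    (ae_of_all _ fun y => norm_wassDist_le_two hd (X.p n y) π)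
  simpa using (le_abs_self _).trans this

variable [TopologicalSpace.SeparableSpace S]

lemma measurable_wassDist_p (hd : ∀ x y : S, dist x y ≤ 1) (π : Measure S)
    [IsProbabilityMeasure π] (n : ℕ) : Measurable fun y => wassDist (X.p n y) π :=
  measurable_wassDist_kernel hd (X.kernel n) π

lemma wassDist_le_mixingRate (hd : ∀ x y : S, dist x y ≤ 1) (π : Measure S)
    [IsProbabilityMeasure π] (x : S) (n : ℕ) : wassDist (X.p n x) π ≤ X.mixingRate π x n := by
  simpa [p_zero, integral_dirac' _ _ (X.measurable_wassDist_p hd π n).stronglyMeasurable]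
    using X.integral_wassDist_le_mixingRate hd π x n 0

end DiscreteMarkovProcess

section DoubleCesaro

open Finset

lemma sum_range_psi_dist_le {ψ : ℕ → ℝ} (hψ : ∀ t, 0 ≤ ψ t) {n j : ℕ} (hj : j < n) :
    ∑ k ∈ range n, ψ (Nat.dist j k) ≤ 2 * ∑ t ∈ range n, ψ t := by
  have hmono : ∀ {m}, m ≤ n → ∑ t ∈ range m, ψ t ≤ ∑ t ∈ range n, ψ t := fun hm =>
    sum_le_sum_of_subset_of_nonneg (range_subset_range.2 hm) fun t _ _ => hψ t
  rw [← sum_range_add_sum_Ico _ hj.le, two_mul]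
  refine add_le_add ?_ ?_
  · calc ∑ k ∈ range j, ψ (Nat.dist j k) = ∑ k ∈ range j, ψ (k + 1) := by
          rw [← sum_range_reflect]
          refine sum_congr rfl fun k hk => congrArg ψ ?_
          rw [Nat.dist_eq_sub_of_le_right (by omega)]
          have := mem_range.1 hk
          omega
      _ ≤ ∑ t ∈ range (j + 1), ψ t := by rw [sum_range_succ']; linarith [hψ 0]
      _ ≤ ∑ t ∈ range n, ψ t := hmono hj
  · calc ∑ k ∈ Ico j n, ψ (Nat.dist j k) = ∑ t ∈ range (n - j), ψ t := by
          rw [sum_Ico_eq_sum_range]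
          refine sum_congr rfl fun t _ => congrArg ψ ?_
          rw [Nat.dist_eq_sub_of_le (Nat.le_add_right j t), Nat.add_sub_cancel_left]
      _ ≤ ∑ t ∈ range n, ψ t := hmono (Nat.sub_le n j)

lemma sum_sum_psi_dist_add_le {ψ : ℕ → ℝ} (hψ : ∀ t, 0 ≤ ψ t) (n : ℕ) :
    ∑ j ∈ range n, ∑ k ∈ range n, (ψ (Nat.dist j k) + ψ j + ψ k)
      ≤ 4 * n * ∑ t ∈ range n, ψ t := by
  calc ∑ j ∈ range n, ∑ k ∈ range n, (ψ (Nat.dist j k) + ψ j + ψ k)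
      ≤ ∑ j ∈ range n, (2 * ∑ t ∈ range n, ψ t + n * ψ j + ∑ t ∈ range n, ψ t) := by
        refine sum_le_sum fun j hj => ?_
        rw [sum_add_distrib, sum_add_distrib, sum_const, card_range, nsmul_eq_mul]
        linarith [sum_range_psi_dist_le hψ (mem_range.1 hj)]
    _ = 4 * n * ∑ t ∈ range n, ψ t := by
        rw [sum_add_distrib, sum_add_distrib, ← mul_sum _ _ (n : ℝ)]
        simp only [sum_const, card_range, nsmul_eq_mul]
        ring

lemma tendsto_inv_sq_mul_sum_sum {ψ : ℕ → ℝ} (hψ0 : ∀ t, 0 ≤ ψ t)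
    (hψ : Tendsto ψ atTop (𝓝 0)) {v : ℕ → ℕ → ℝ} {b : ℝ}
    (hv : ∀ j k, |v j k - b| ≤ ψ (Nat.dist j k) + ψ j + ψ k) :
    Tendsto (fun n : ℕ => ((n : ℝ)⁻¹) ^ 2 * ∑ j ∈ range n, ∑ k ∈ range n, v j k) atTop
      (𝓝 b) := by
  have hcesaro : Tendsto (fun n : ℕ => 4 * ((n : ℝ)⁻¹ * ∑ t ∈ range n, ψ t)) atTop (𝓝 0) := by
    simpa using hψ.cesaro.const_mul 4
  refine tendsto_iff_dist_tendsto_zero.2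
    (squeeze_zero' (Eventually.of_forall fun _ => dist_nonneg) ?_ hcesaro)
  filter_upwards [eventually_ne_atTop 0] with n hn
  have hn' : (n : ℝ) ≠ 0 := Nat.cast_ne_zero.2 hn
  have herr : ((n : ℝ)⁻¹) ^ 2 * ∑ j ∈ range n, ∑ k ∈ range n, v j k - b
      = ((n : ℝ)⁻¹) ^ 2 * ∑ j ∈ range n, ∑ k ∈ range n, (v j k - b) := by
    simp only [sum_sub_distrib, sum_const, card_range, nsmul_eq_mul]
    field_simp
  rw [Real.dist_eq, herr, abs_mul, abs_of_nonneg (by positivity)]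
  calc ((n : ℝ)⁻¹) ^ 2 * |∑ j ∈ range n, ∑ k ∈ range n, (v j k - b)|
      ≤ ((n : ℝ)⁻¹) ^ 2 * ∑ j ∈ range n, ∑ k ∈ range n, (ψ (Nat.dist j k) + ψ j + ψ k) := by
        gcongr
        refine (abs_sum_le_sum_abs _ _).trans (sum_le_sum fun j _ => ?_)
        exact (abs_sum_le_sum_abs _ _).trans (sum_le_sum fun k _ => hv j k)
    _ ≤ ((n : ℝ)⁻¹) ^ 2 * (4 * n * ∑ t ∈ range n, ψ t) := by
        gcongr
        exact sum_sum_psi_dist_add_le hψ0 n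
    _ = 4 * ((n : ℝ)⁻¹ * ∑ t ∈ range n, ψ t) := by
        field_simp

end DoubleCesaro

lemma integral_mul_sum_sq {ι Ω : Type*} [MeasurableSpace Ω] {μ : Measure Ω} (c : ℝ)
    (s : Finset ι) {F : ι → Ω → ℝ} (hF : ∀ j k, Integrable (fun ω => F j ω * F k ω) μ) :
    ∫ ω, (c * ∑ k ∈ s, F k ω) ^ 2 ∂μ = c ^ 2 * ∑ j ∈ s, ∑ k ∈ s, ∫ ω, F j ω * F k ω ∂μ := by
  simp_rw [mul_pow, sq (∑ k ∈ s, F k _), Finset.sum_mul_sum]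
  rw [integral_const_mul,
    integral_finsetSum _ fun j _ => integrable_finsetSum _ fun k _ => hF j k]
  exact congrArg _ (Finset.sum_congr rfl fun j _ => integral_finsetSum _ fun k _ => hF j k)

namespace DiscreteMarkovProcess

variable {S Ω : Type*} [MeasurableSpace S] [PseudoMetricSpace S] [OpensMeasurableSpace S]
  [TopologicalSpace.SeparableSpace S] [MeasurableSpace Ω] (X : DiscreteMarkovProcess S Ω)
  (π : Measure S) [IsProbabilityMeasure π] {K : NNReal} {f : S → ℝ} {C : ℝ}

lemma abs_integral_comp_sub_le (hd : ∀ x y : S, dist x y ≤ 1) (hf : LipschitzWith K f)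
    (x : S) (s : ℕ) :
    |∫ ω, f (X.M s ω) ∂(X.P x) - ∫ y, f y ∂π| ≤ K * X.mixingRate π x s := by
  rw [X.integral_comp s x hf.continuous.aestronglyMeasurable]
  exact (hf.abs_integral_sub_integral_le_mul_wassDist hd _ π).trans
    (mul_le_mul_of_nonneg_left (X.wassDist_le_mixingRate hd π x s) K.coe_nonneg)

lemma abs_integral_mul_comp_add_sub_le (hd : ∀ x y : S, dist x y ≤ 1) (hf : LipschitzWith K f)
    (hC : ∀ z, |f z| ≤ C) (x : S) (s t : ℕ) :
    |∫ ω, f (X.M s ω) * f (X.M (s + t) ω) ∂(X.P x)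
        - (∫ y, f y ∂π) * ∫ ω, f (X.M s ω) ∂(X.P x)| ≤ C * K * X.mixingRate π x t := by
  set a := ∫ y, f y ∂π
  set Pf := fun y => ∫ z, f z ∂(X.p t y)
  have hfm : Measurable f := hf.continuous.measurable
  have hPfm : Measurable Pf := X.measurable_integral_p t hf.continuous.stronglyMeasurable
  have hPfC : ∀ y, |Pf y| ≤ C := fun y => abs_integral_le_of_forall_abs_le hC
  have hW : Integrable (fun y => wassDist (X.p t y) π) (X.p s x) :=
    .of_bound (X.measurable_wassDist_p hd π t).aestronglyMeasurable 2
      (ae_of_all _ fun y => norm_wassDist_le_two hd _ π)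
  have hbound : ∀ y, ‖f y * (Pf y - a)‖ ≤ C * K * wassDist (X.p t y) π := fun y => by
    rw [Real.norm_eq_abs, abs_mul, mul_assoc]
    exact mul_le_mul (hC y) (hf.abs_integral_sub_integral_le_mul_wassDist hd _ π) (abs_nonneg _)
      ((abs_nonneg _).trans (hC y))
  have heq : ∫ ω, f (X.M s ω) * f (X.M (s + t) ω) ∂(X.P x) - a * ∫ ω, f (X.M s ω) ∂(X.P x)
      = ∫ y, f y * (Pf y - a) ∂(X.p s x) := by
    have hf_int : Integrable (fun ω => f (X.M s ω)) (X.P x) :=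
      .of_bound (hfm.comp (X.measM s)).aestronglyMeasurable C (ae_of_all _ fun ω => hC _)
    rw [X.integral_comp_mul_comp_add hfm hfm hC hC, ← integral_const_mul,
      ← integral_sub (X.integrable_comp_mul_comp hfm hPfm hC hPfC x s s) (hf_int.const_mul a),
      ← X.integral_comp (g := fun y => f y * (Pf y - a)) s x
        (hfm.mul (hPfm.sub_const a)).aestronglyMeasurable]
    exact congrArg _ (funext fun ω => by ring)
  rw [heq]
  calc |∫ y, f y * (Pf y - a) ∂(X.p s x)|
      ≤ ∫ y, C * K * wassDist (X.p t y) π ∂(X.p s x) :=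
        norm_integral_le_of_norm_le (hW.const_mul _) (ae_of_all _ hbound)
    _ = C * K * ∫ y, wassDist (X.p t y) π ∂(X.p s x) := integral_const_mul _ _
    _ ≤ C * K * X.mixingRate π x t :=
        mul_le_mul_of_nonneg_left (X.integral_wassDist_le_mixingRate hd π x t s)
          (mul_nonneg ((abs_nonneg _).trans (hC x)) K.coe_nonneg)

lemma abs_integral_mul_comp_sub_sq_le (hd : ∀ x y : S, dist x y ≤ 1) (hf : LipschitzWith K f)
    (hC : ∀ z, |f z| ≤ C) (x : S) (j k : ℕ) :
    |∫ ω, f (X.M j ω) * f (X.M k ω) ∂(X.P x) - (∫ y, f y ∂π) ^ 2|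
      ≤ C * K * (X.mixingRate π x (Nat.dist j k) + X.mixingRate π x j + X.mixingRate π x k) := by
  wlog hjk : j ≤ k generalizing j k
  · simp_rw [mul_comm (f (X.M j _)), Nat.dist_comm j k]
    linarith [this k j (le_of_not_ge hjk)]
  obtain ⟨t, rfl⟩ := Nat.exists_eq_add_of_le hjk
  rw [Nat.dist_eq_sub_of_le hjk, Nat.add_sub_cancel_left]
  have hcorr := X.abs_integral_mul_comp_add_sub_le π hd hf hC x j t
  have hmean := X.abs_integral_comp_sub_le π hd hf x j
  have hC0 : 0 ≤ C := (abs_nonneg _).trans (hC x)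
  have hφ_nonneg := mul_nonneg (mul_nonneg hC0 K.coe_nonneg) (X.mixingRate_nonneg π x (j + t))
  set a := ∫ y, f y ∂π
  set E := ∫ ω, f (X.M j ω) ∂(X.P x)
  have ha : |a| ≤ C := abs_integral_le_of_forall_abs_le hC
  have hE : |a| * |E - a| ≤ C * K * X.mixingRate π x j :=
    (mul_le_mul ha hmean (abs_nonneg _) hC0).trans_eq (mul_assoc _ _ _).symm
  have htri := abs_sub_le (∫ ω, f (X.M j ω) * f (X.M (j + t) ω) ∂(X.P x)) (a * E) (a ^ 2)
  rw [show a * E - a ^ 2 = a * (E - a) by ring, abs_mul] at htri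
  rw [mul_add, mul_add]
  linarith

end DiscreteMarkovProcess

/-- Under the hypothesis `lim_n sup_m ∫ d_W(p^n(y,·),π) p^m(x,dy) = 0`, for
every bounded Lipschitz `f` and every `x`,
`lim_n E^x[((1/n) ∑_{k<n} f(M_k))²] = (∫ f dπ)²`. -/
theorem birkhoff_discrete_second_moment
    {S : Type} [MeasurableSpace S] [MetricSpace S] [PolishSpace S] [BorelSpace S]
    (hd : ∀ x y : S, dist x y ≤ 1)
    {Ω : Type} [MeasurableSpace Ω] (X : DiscreteMarkovProcess S Ω)
    (π : Measure S) [IsProbabilityMeasure π]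
    (hconv : ∀ x : S, Tendsto
      (fun n : ℕ => ⨆ m : ℕ, ∫ y, wassDist (X.p n y) π ∂(X.p m x)) atTop (𝓝 0))
    (f : S → ℝ) (hfl : ∃ K : NNReal, LipschitzWith K f) (hfb : ∃ C : ℝ, ∀ z : S, |f z| ≤ C)
    (x : S) :
    Tendsto
      (fun n : ℕ => ∫ ω, ((n : ℝ)⁻¹ * (∑ k ∈ Finset.range n, f (X.M k ω))) ^ 2 ∂(X.P x))
      atTop (𝓝 ((∫ y, f y ∂π) ^ 2)) := by
  obtain ⟨K, hK⟩ := hfl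
  obtain ⟨C, hC⟩ := hfb
  have hC0 : 0 ≤ C := (abs_nonneg _).trans (hC x)
  have hfm : Measurable f := hK.continuous.measurable
  have hψ : Tendsto (fun t => C * K * X.mixingRate π x t) atTop (𝓝 0) := by
    simpa [DiscreteMarkovProcess.mixingRate] using (hconv x).const_mul (C * K)
  refine (tendsto_inv_sq_mul_sum_sum (ψ := fun t => C * K * X.mixingRate π x t)
    (v := fun j k => ∫ ω, f (X.M j ω) * f (X.M k ω) ∂(X.P x))
    (fun t => mul_nonneg (mul_nonneg hC0 K.coe_nonneg) (X.mixingRate_nonneg π x t)) hψ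
    fun j k => ?_).congr fun n => ?_
  · simpa only [mul_add] using X.abs_integral_mul_comp_sub_sq_le π hd hK hC x j k
  · exact (integral_mul_sum_sq _ _ fun j k => X.integrable_comp_mul_comp hfm hfm hC hC x j k).symm
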